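/- arXiv:2212.12212 — 6 statements merged into one kernel-verified Lean document; each statement's English description precedes it below -/
import Mathlib

section
/- Let n ≥ 3 be an integer. If there exist natural numbers a and b such that 2n² + 1 = 3^a and 8n - 7 = 3^b, then n = 11. -/
/-!
Since 32 (2n² + 1) - (8n - 7)(8n + 7) = 81, a power of 3 dividing both 2n² + 1 and 8n - 7 is at
most 3⁴. So either 2n² + 1 ≤ 81, which leaves n ≤ 6 where 2n² + 1 is never a power of 3, or
8n - 7 ∈ {1, 3, 9, 27, 81}, and of these only 81 is ≡ 1 mod 8 with n ≥ 3.
-/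

theorem dvd_eighty_one_of_dvd_two_sq_add_one_of_dvd_eight_mul_sub_seven {R : Type*} [CommRing R]
    {d x : R} (h₁ : d ∣ 2 * x ^ 2 + 1) (h₂ : d ∣ 8 * x - 7) : d ∣ 81 := by
  have h := dvd_sub (h₁.mul_left 32) (h₂.mul_right (8 * x + 7))
  rwa [show 32 * (2 * x ^ 2 + 1) - (8 * x - 7) * (8 * x + 7) = (81 : R) by ring] at h

theorem Nat.dvd_eighty_one_of_dvd_two_sq_add_one_of_dvd_eight_mul_sub_seven {d n : ℕ}
    (h₁ : d ∣ 2 * n ^ 2 + 1) (h₂ : d ∣ 8 * n - 7) : d ∣ 81 := by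
  rcases Nat.eq_zero_or_pos n with rfl | hn
  · exact (Nat.dvd_one.mp h₁).symm ▸ one_dvd 81
  have h₁' : (d : ℤ) ∣ 2 * (n : ℤ) ^ 2 + 1 := by exact_mod_cast Int.natCast_dvd_natCast.mpr h₁
  have h₂' : (d : ℤ) ∣ 8 * (n : ℤ) - 7 := by
    have := Int.natCast_dvd_natCast.mpr h₂
    rwa [Nat.cast_sub (by omega), Nat.cast_mul, Nat.cast_ofNat, Nat.cast_ofNat] at this
  exact_mod_cast _root_.dvd_eighty_one_of_dvd_two_sq_add_one_of_dvd_eight_mul_sub_seven h₁' h₂'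

theorem powers_of_three_force_eleven (n : ℕ) (hn : 3 ≤ n)
    (h : ∃ a b : ℕ, 2 * n ^ 2 + 1 = 3 ^ a ∧ 8 * n - 7 = 3 ^ b) : n = 11 := by
  obtain ⟨a, b, ha, hb⟩ := h
  have hmin : min a b ≤ 4 := by
    refine (Nat.pow_dvd_pow_iff_le_right (by norm_num : 1 < 3)).mp ?_
    exact Nat.dvd_eighty_one_of_dvd_two_sq_add_one_of_dvd_eight_mul_sub_seven
      (ha ▸ pow_dvd_pow 3 (min_le_left a b)) (hb ▸ pow_dvd_pow 3 (min_le_right a b))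
  rcases min_le_iff.mp hmin with ha4 | hb4
  · have hn6 : n ≤ 6 := by nlinarith [Nat.pow_le_pow_right (by norm_num : 1 ≤ 3) ha4]
    interval_cases n <;> interval_cases a <;> omega
  · interval_cases b <;> omega
end

section
/- For all integers n ≥ 1 and all integers a₁, a₂, …, a_n, the following identity holds: [a₁² + (-a₁)² + (2a₁)² + (-2a₁)² + (3a₁)²] + ∑_{i=2}^{n} [a_i² + (-a_i)² + (a₁+a_i)² + (a₁-a_i)² + (-a₁+a_i)² + (-a₁-a_i)² + (2a₁+a_i)² + (2a₁-a_i)² + (2a_i)² + (-2a_i)² + (a₁+2a_i)² + (a₁-2a_i)²] + ∑_{2≤i<j≤n} [(a_i+a_j)² + (a_i-a_j)² + (-a_i+a_j)² + (-a_i-a_j)² + (a₁+a_i+a_j)² + (a₁+a_i-a_j)² + (a₁-a_i+a_j)² + (a₁-a_i-a_j)²] = (2n² + 8n + 9)a₁² + (8n + 8)∑_{i=2}^{n} a_i². -/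
theorem sum_of_squares_identity (n : ℕ) (hn : 1 ≤ n) (a : ℕ → ℤ) :
    ((a 1) ^ 2 + (-(a 1)) ^ 2 + (2 * a 1) ^ 2 + (-(2 * a 1)) ^ 2 + (3 * a 1) ^ 2)
    + ∑ i ∈ Finset.Icc 2 n,
        ((a i) ^ 2 + (-(a i)) ^ 2 + (a 1 + a i) ^ 2 + (a 1 - a i) ^ 2
          + (-(a 1) + a i) ^ 2 + (-(a 1) - a i) ^ 2 + (2 * a 1 + a i) ^ 2
          + (2 * a 1 - a i) ^ 2 + (2 * a i) ^ 2 + (-(2 * a i)) ^ 2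
          + (a 1 + 2 * a i) ^ 2 + (a 1 - 2 * a i) ^ 2)
    + ∑ p ∈ (Finset.Icc 2 n ×ˢ Finset.Icc 2 n).filter (fun p => p.1 < p.2),
        ((a p.1 + a p.2) ^ 2 + (a p.1 - a p.2) ^ 2 + (-(a p.1) + a p.2) ^ 2
          + (-(a p.1) - a p.2) ^ 2 + (a 1 + a p.1 + a p.2) ^ 2
          + (a 1 + a p.1 - a p.2) ^ 2 + (a 1 - a p.1 + a p.2) ^ 2
          + (a 1 - a p.1 - a p.2) ^ 2)
    = (2 * (n : ℤ) ^ 2 + 8 * n + 9) * (a 1) ^ 2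
      + (8 * (n : ℤ) + 8) * ∑ i ∈ Finset.Icc 2 n, (a i) ^ 2 := by
  induction n with
  | zero => omega
  | succ m ih =>
    rcases Nat.eq_zero_or_pos m with h0 | hm
    · subst h0
      have he : Finset.Icc 2 1 = (∅ : Finset ℕ) := by decide
      simp [he]
      ring
    · have ih' := ih hm
      have hins : Finset.Icc 2 (m + 1) = insert (m + 1) (Finset.Icc 2 m) := by
        ext x
        simp only [Finset.mem_Icc, Finset.mem_insert]
        omega
      have hnot : (m + 1) ∉ Finset.Icc 2 m := by
        simp [Finset.mem_Icc]
      have hpair : ((Finset.Icc 2 (m+1) ×ˢ Finset.Icc 2 (m+1)).filter (fun p => p.1 < p.2))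
          = ((Finset.Icc 2 m ×ˢ Finset.Icc 2 m).filter (fun p => p.1 < p.2))
            ∪ (Finset.Icc 2 m).image (fun i => (i, m + 1)) := by
        ext ⟨i, j⟩
        simp only [Finset.mem_filter, Finset.mem_product, Finset.mem_Icc, Finset.mem_union,
          Finset.mem_image, Prod.mk.injEq]
        constructor
        · rintro ⟨⟨⟨h2i, him⟩, ⟨h2j, hjm⟩⟩, hij⟩
          rcases Nat.lt_or_ge j (m + 1) with hj | hj
          · exact Or.inl ⟨⟨⟨h2i, by omega⟩, ⟨h2j, by omega⟩⟩, hij⟩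
          · exact Or.inr ⟨i, ⟨h2i, by omega⟩, rfl, by omega⟩
        · rintro (⟨⟨⟨h2i, him⟩, ⟨h2j, hjm⟩⟩, hij⟩ | ⟨x, ⟨h2x, hxm⟩, rfl, rfl⟩)
          · exact ⟨⟨⟨h2i, by omega⟩, ⟨h2j, by omega⟩⟩, hij⟩
          · exact ⟨⟨⟨h2x, by omega⟩, ⟨by omega, le_refl _⟩⟩, by omega⟩
      have hdisj : Disjoint ((Finset.Icc 2 m ×ˢ Finset.Icc 2 m).filter (fun p => p.1 < p.2))
          ((Finset.Icc 2 m).image (fun i => (i, m + 1))) := by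
        rw [Finset.disjoint_left]
        rintro ⟨i, j⟩ hmem hmem'
        simp only [Finset.mem_filter, Finset.mem_product, Finset.mem_Icc] at hmem
        simp only [Finset.mem_image, Prod.mk.injEq] at hmem'
        obtain ⟨x, hx, rfl, rfl⟩ := hmem'
        omega
      have hcard : ((Finset.Icc 2 m).card : ℤ) = (m : ℤ) - 1 := by
        rw [Nat.card_Icc]
        omega
      have himg : ∑ p ∈ (Finset.Icc 2 m).image (fun i => (i, m + 1)),
          ((a p.1 + a p.2) ^ 2 + (a p.1 - a p.2) ^ 2 + (-(a p.1) + a p.2) ^ 2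
          + (-(a p.1) - a p.2) ^ 2 + (a 1 + a p.1 + a p.2) ^ 2
          + (a 1 + a p.1 - a p.2) ^ 2 + (a 1 - a p.1 + a p.2) ^ 2
          + (a 1 - a p.1 - a p.2) ^ 2)
          = ((m : ℤ) - 1) * (4 * (a 1) ^ 2 + 8 * (a (m+1)) ^ 2)
            + 8 * ∑ i ∈ Finset.Icc 2 m, (a i) ^ 2 := by
        rw [Finset.sum_image (by intro x _ y _ h; exact (Prod.mk.injEq _ _ _ _).mp h |>.1)]
        have : ∀ i ∈ Finset.Icc 2 m,
            ((a i + a (m+1)) ^ 2 + (a i - a (m+1)) ^ 2 + (-(a i) + a (m+1)) ^ 2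
            + (-(a i) - a (m+1)) ^ 2 + (a 1 + a i + a (m+1)) ^ 2
            + (a 1 + a i - a (m+1)) ^ 2 + (a 1 - a i + a (m+1)) ^ 2
            + (a 1 - a i - a (m+1)) ^ 2)
            = (4 * (a 1) ^ 2 + 8 * (a (m+1)) ^ 2) + 8 * (a i) ^ 2 := by
          intro i _; ring
        rw [Finset.sum_congr rfl this, Finset.sum_add_distrib, Finset.sum_const,
          ← Finset.mul_sum, nsmul_eq_mul, hcard]
      rw [hpair, hins, Finset.sum_union hdisj, Finset.sum_insert hnot, Finset.sum_insert hnot,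
        himg]
      push_cast
      linear_combination ih'
end

section
/- Let R be a commutative ring, n an integer, and let h, t, s, u ∈ R satisfy: t² = 2h - s + (2n-2)·1, s² = 2h - u + (2n-2)·1, t·h = 2n·h, s·h = 2n·h, and h² = (2n²+1)·h. Then t⁴ = (8n² - 2)h + (4n² - 6n + 2)·1 - u - (4n - 4)s. -/
theorem group_ring_fourth_power_general (R : Type*) [CommRing R] (n : ℤ) (h t s u : R)
    (h1 : t ^ 2 = 2 * h - s + (2 * (n : R) - 2) * 1)
    (h2 : s ^ 2 = 2 * h - u + (2 * (n : R) - 2) * 1)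
    (h4 : s * h = 2 * (n : R) * h)
    (h5 : h ^ 2 = (2 * (n : R) ^ 2 + 1) * h) :
    t ^ 4 = (8 * (n : R) ^ 2 - 2) * h + (4 * (n : R) ^ 2 - 6 * (n : R) + 2) * 1
      - u - (4 * (n : R) - 4) * s := by
  have ht4 : t ^ 4 = (2 * h - s + (2 * (n : R) - 2)) ^ 2 := by
    rw [show t ^ 4 = (t ^ 2) ^ 2 by ring, h1, mul_one]
  rw [ht4]
  linear_combination h2 + 4 * h5 - 4 * h4

theorem group_ring_fourth_power (R : Type*) [CommRing R] (n : ℤ) (h t s u : R)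
    (h1 : t ^ 2 = 2 * h - s + (2 * (n : R) - 2) * 1)
    (h2 : s ^ 2 = 2 * h - u + (2 * (n : R) - 2) * 1)
    (h3 : t * h = 2 * (n : R) * h)
    (h4 : s * h = 2 * (n : R) * h)
    (h5 : h ^ 2 = (2 * (n : R) ^ 2 + 1) * h) :
    t ^ 4 = (8 * (n : R) ^ 2 - 2) * h + (4 * (n : R) ^ 2 - 6 * (n : R) + 2) * 1
      - u - (4 * (n : R) - 4) * s :=
  group_ring_fourth_power_general R n h t s u h1 h2 h4 h5
end

section
/- Let n ≥ 3, let H be a finite abelian group of odd order, let e be its identity, and let T be a subset of H with |T| = 2n, e ∉ T, T = T^(-1), satisfying the group ring equation T² = 2H - T^(2) + (2n-2)e over ℤ[H], where T^(2) = {t² : t ∈ T} and H denotes the sum of all group elements. Then for every nontrivial character χ of H, χ(T) ≠ 0. -/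
open Finset

lemma sum_char_eq_zero {H : Type*} [CommGroup H] [Fintype H] (χ : H →* ℂ) (hχ : χ ≠ 1) :
    ∑ h : H, χ h = 0 := by
  have hex : ∃ g : H, χ g ≠ 1 := by
    by_contra h
    push_neg at h
    exact hχ (MonoidHom.ext fun x => by simp [h x])
  obtain ⟨g, hg⟩ := hex
  have key : χ g * ∑ h : H, χ h = ∑ h : H, χ h := by
    rw [Finset.mul_sum]
    simp_rw [← map_mul]
    exact Fintype.sum_bijective (g * ·) (Group.mulLeft_bijective g) _ _ fun h => rfl
  have h0 : (χ g - 1) * ∑ h : H, χ h = 0 := by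
    rw [sub_mul, one_mul, key, sub_self]
  rcases mul_eq_zero.mp h0 with h | h
  · exact ((sub_ne_zero.mpr hg) h).elim
  · exact h

theorem char_sum_ne_zero (n : ℕ) (hn : 3 ≤ n) (H : Type*) [CommGroup H] [Fintype H]
    [DecidableEq H] (hodd : Odd (Fintype.card H)) (T : Finset H)
    (hcard : T.card = 2 * n) (hone : (1 : H) ∉ T)
    (hsym : ∀ t : H, t ∈ T ↔ t⁻¹ ∈ T)
    (heq : (∑ t ∈ T, MonoidAlgebra.single t (1 : ℤ)) ^ 2 =
      2 * (∑ h : H, MonoidAlgebra.single h (1 : ℤ))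
        - (∑ t ∈ T, MonoidAlgebra.single (t ^ 2) (1 : ℤ))
        + (2 * (n : ℤ) - 2) • MonoidAlgebra.single (1 : H) (1 : ℤ)) :
    ∀ χ : H →* ℂ, χ ≠ 1 → (∑ t ∈ T, χ t) ≠ 0 := by
  have hroot : ∀ (χ : H →* ℂ) (y : H), ‖χ y‖ = 1 := by
    intro χ y
    refine Complex.norm_eq_one_of_pow_eq_one (n := Fintype.card H) ?_ Fintype.card_ne_zero
    rw [← map_pow, pow_card_eq_one, map_one]
  -- key scalar identity for any nontrivial character ψ
  have key : ∀ ψ : H →* ℂ, ψ ≠ 1 →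
      (∑ t ∈ T, ψ t) ^ 2 = -(∑ t ∈ T, ψ t ^ 2) + (2 * (n : ℂ) - 2) := by
    intro ψ hψ
    have h := congrArg (MonoidAlgebra.lift ℤ ℂ H ψ) heq
    simp only [map_pow, map_sum, map_sub, map_add, map_mul, map_ofNat, map_zsmul,
      MonoidAlgebra.lift_single, one_smul, map_one, zsmul_eq_mul, map_intCast] at h
    rw [sum_char_eq_zero ψ hψ] at h
    push_cast at h
    rw [h]; ring
  intro χ hχ hS
  have h1 := key χ hχ
  rw [hS] at h1
  have h2 : (∑ t ∈ T, χ t ^ 2) = 2 * (n : ℂ) - 2 := by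
    linear_combination h1
  -- χ² is nontrivial
  have hχ2 : χ ^ 2 ≠ 1 := by
    intro h
    apply hχ
    ext x
    have hx : χ x ^ 2 = 1 := by
      have := congrArg (fun f : H →* ℂ => f x) h
      simpa using this
    have hcardpow : χ x ^ (Fintype.card H) = 1 := by
      rw [← map_pow, pow_card_eq_one, map_one]
    have hd : orderOf (χ x) ∣ Nat.gcd 2 (Fintype.card H) :=
      Nat.dvd_gcd (orderOf_dvd_of_pow_eq_one hx) (orderOf_dvd_of_pow_eq_one hcardpow)
    rw [hodd.coprime_two_left] at hd
    simpa using orderOf_eq_one_iff.mp (Nat.dvd_one.mp hd)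
  have h3 := key (χ ^ 2) hχ2
  have hsum2 : (∑ t ∈ T, (χ ^ 2) t) = 2 * (n : ℂ) - 2 := by
    simpa [MonoidHom.pow_apply] using h2
  rw [hsum2] at h3
  have hA : ∑ t ∈ T, (χ ^ 2) t ^ 2 = (2 * (n : ℂ) - 2) - (2 * (n : ℂ) - 2) ^ 2 := by
    linear_combination h3
  have hnorm : ‖∑ t ∈ T, (χ ^ 2) t ^ 2‖ ≤ 2 * (n : ℝ) := by
    calc ‖∑ t ∈ T, (χ ^ 2) t ^ 2‖ ≤ ∑ t ∈ T, ‖(χ ^ 2) t ^ 2‖ := norm_sum_le _ _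
    _ = ∑ t ∈ T, (1 : ℝ) := by
        refine Finset.sum_congr rfl fun t _ => ?_
        rw [norm_pow, hroot, one_pow]
    _ = 2 * (n : ℝ) := by rw [Finset.sum_const, hcard]; simp
  rw [hA] at hnorm
  have hcast : (2 * (n : ℂ) - 2) - (2 * (n : ℂ) - 2) ^ 2
      = ((2 * (n : ℝ) - 2 - (2 * (n : ℝ) - 2) ^ 2 : ℝ) : ℂ) := by
    push_cast; ring
  rw [hcast, Complex.norm_real, Real.norm_eq_abs] at hnorm
  have hn3 : (3 : ℝ) ≤ (n : ℝ) := by exact_mod_cast hn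
  have hle := neg_abs_le (2 * (n : ℝ) - 2 - (2 * (n : ℝ) - 2) ^ 2)
  nlinarith [hnorm, hle, hn3]
end

section
/- Let G be a finite abelian group that is an internal direct sum of subgroups H and K of coprime orders. Suppose A and B are subsets of G with |A| = |H|, |B| = |K|, such that every element of G can be written uniquely as a + b with a ∈ A, b ∈ B. Then every element of G can be written uniquely as h + b with h ∈ H, b ∈ B, and every element of G can be written uniquely as a + k with a ∈ A, k ∈ K. -/
set_option linter.unusedSectionVars false

open Finset

section Aux

variable {G : Type*} [AddCommGroup G] [Fintype G] [DecidableEq G]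

/-- generating element of the group algebra attached to a finset, pushed by `f` -/
noncomputable def fgen (p : ℕ) (s : Finset G) (f : G → G) : AddMonoidAlgebra (ZMod p) G :=
  ∑ a ∈ s, AddMonoidAlgebra.single (f a) 1

lemma fgen_mul_coeff (p : ℕ) (A B : Finset G) (f : G → G) (g : G) :
    (fgen p A f * fgen p B id).coeff g
      = (((A ×ˢ B).filter (fun x => f x.1 + x.2 = g)).card : ZMod p) := by
  unfold fgen
  rw [Finset.sum_mul_sum]
  simp only [AddMonoidAlgebra.single_mul_single, one_mul, id]
  rw [← Finset.sum_product']
  rw [AddMonoidAlgebra.coeff_sum, Finsupp.finset_sum_apply]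
  simp only [AddMonoidAlgebra.coeff_single, Finsupp.single_apply]
  rw [Finset.sum_boole]

lemma card_filter_eq_one_iff (A B : Finset G) (f : G → G) (g : G) :
    ((A ×ˢ B).filter (fun x => f x.1 + x.2 = g)).card = 1
      ↔ ∃! x : G × G, x.1 ∈ A ∧ x.2 ∈ B ∧ f x.1 + x.2 = g := by
  rw [Finset.card_eq_one]
  constructor
  · rintro ⟨x, hx⟩
    have hxmem : x ∈ (A ×ˢ B).filter (fun x => f x.1 + x.2 = g) := by
      rw [hx]; exact Finset.mem_singleton_self x
    rw [Finset.mem_filter, Finset.mem_product] at hxmem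
    refine ⟨x, ⟨hxmem.1.1, hxmem.1.2, hxmem.2⟩, ?_⟩
    intro y hy
    have : y ∈ (A ×ˢ B).filter (fun x => f x.1 + x.2 = g) := by
      rw [Finset.mem_filter, Finset.mem_product]
      exact ⟨⟨hy.1, hy.2.1⟩, hy.2.2⟩
    rw [hx, Finset.mem_singleton] at this
    exact this
  · rintro ⟨x, ⟨hx1, hx2, hx3⟩, hun⟩
    refine ⟨x, ?_⟩
    rw [Finset.eq_singleton_iff_unique_mem]
    constructor
    · rw [Finset.mem_filter, Finset.mem_product]; exact ⟨⟨hx1, hx2⟩, hx3⟩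
    · intro y hy
      rw [Finset.mem_filter, Finset.mem_product] at hy
      exact hun y ⟨hy.1.1, hy.1.2, hy.2⟩

lemma fgen_univ_coeff (p : ℕ) (g : G) : (fgen p univ id).coeff g = 1 := by
  unfold fgen
  rw [AddMonoidAlgebra.coeff_sum, Finsupp.finset_sum_apply]
  simp only [AddMonoidAlgebra.coeff_single, Finsupp.single_apply, id]
  rw [Finset.sum_ite_eq' univ g (fun _ => (1 : ZMod p))]
  simp

lemma single_mul_fgen_univ (p : ℕ) (a : G) :
    AddMonoidAlgebra.single a (1 : ZMod p) * fgen p univ id = fgen p univ id := by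
  unfold fgen
  rw [Finset.mul_sum]
  simp only [AddMonoidAlgebra.single_mul_single, one_mul, id]
  exact Fintype.sum_equiv (Equiv.addLeft a) _ _ (fun x => rfl)

lemma fgen_mul_univ (p : ℕ) (A : Finset G) :
    fgen p A id * fgen p univ id = (A.card : ZMod p) • fgen p univ id := by
  conv_lhs => rw [fgen, Finset.sum_mul]
  simp only [id, single_mul_fgen_univ]
  rw [Finset.sum_const, Nat.cast_smul_eq_nsmul]

lemma fgen_pow_mul_univ (p : ℕ) (A : Finset G) (k : ℕ) :
    fgen p A id ^ k * fgen p univ id = ((A.card : ZMod p)) ^ k • fgen p univ id := by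
  induction k with
  | zero => simp
  | succ k ih =>
      rw [pow_succ, mul_assoc, fgen_mul_univ, mul_smul_comm, ih, smul_smul, ← pow_succ']

lemma prime_step (p : ℕ) (hp : p.Prime) (A B : Finset G) (hpA : ¬ p ∣ A.card)
    (hfact : ∀ g : G, ∃! x : G × G, x.1 ∈ A ∧ x.2 ∈ B ∧ x.1 + x.2 = g) :
    ∀ g : G, ∃! x : G × G, x.1 ∈ A ∧ x.2 ∈ B ∧ p • x.1 + x.2 = g := by
  haveI : Fact p.Prime := ⟨hp⟩
  haveI : CharP (AddMonoidAlgebra (ZMod p) G) p := by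
    refine charP_of_injective_algebraMap (R := ZMod p) ?_ p
    intro x y h
    have h0 : (algebraMap (ZMod p) (AddMonoidAlgebra (ZMod p) G) x).coeff 0
        = (algebraMap (ZMod p) (AddMonoidAlgebra (ZMod p) G) y).coeff 0 := by rw [h]
    simpa [AddMonoidAlgebra.coe_algebraMap, Finsupp.single_apply] using h0
  -- the main algebraic identity
  have hAB : fgen p A id * fgen p B id = fgen p univ id := by
    apply AddMonoidAlgebra.ext; apply Finsupp.ext
    intro g
    rw [fgen_mul_coeff, fgen_univ_coeff]
    have h1 : ((A ×ˢ B).filter (fun x => id x.1 + x.2 = g)).card = 1 :=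
      (card_filter_eq_one_iff A B id g).2 (hfact g)
    rw [h1]; simp
  have hpow : fgen p A (fun a => p • a) * fgen p B id = fgen p univ id := by
    have hfrob : fgen p A (fun a => p • a) = fgen p A id ^ p := by
      unfold fgen
      rw [sum_pow_char]
      simp [AddMonoidAlgebra.single_pow]
    rw [hfrob, ← pow_sub_one_mul hp.pos.ne' (fgen p A id), mul_assoc, hAB,
      fgen_pow_mul_univ]
    have hcard : (A.card : ZMod p) ≠ 0 := by
      rw [Ne, ZMod.natCast_eq_zero_iff]
      exact hpA
    rw [ZMod.pow_card_sub_one_eq_one hcard, one_smul]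
  -- coefficients
  set N : G → ℕ := fun g => ((A ×ˢ B).filter (fun x => p • x.1 + x.2 = g)).card with hN
  have hmod : ∀ g : G, (N g : ZMod p) = 1 := by
    intro g
    have := congrArg (fun x : AddMonoidAlgebra (ZMod p) G => x.coeff g) hpow
    simpa [fgen_mul_coeff, fgen_univ_coeff] using this
  have hge : ∀ g : G, 1 ≤ N g := by
    intro g
    rcases Nat.eq_zero_or_pos (N g) with h | h
    · exfalso
      have h2 := hmod g
      rw [h, Nat.cast_zero] at h2
      exact zero_ne_one h2
    · exact h
  have hsum : ∑ g : G, N g = Fintype.card G := by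
    have h1 : ∑ g : G, N g = (A ×ˢ B).card := by
      rw [hN]
      exact (Finset.card_eq_sum_card_fiberwise (fun x _ => Finset.mem_univ _)).symm
    have h2 : (A ×ˢ B).card = ∑ g : G,
        ((A ×ˢ B).filter (fun x => id x.1 + x.2 = g)).card :=
      Finset.card_eq_sum_card_fiberwise (fun x _ => Finset.mem_univ _)
    have h3 : ∀ g : G, ((A ×ˢ B).filter (fun x => x.1 + x.2 = g)).card = 1 := by
      intro g
      exact (card_filter_eq_one_iff A B id g).2 (hfact g)
    rw [h1, h2]
    simp [h3]
  have hone : ∀ g : G, N g = 1 := by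
    have heq : ∑ g : G, (1 : ℕ) = ∑ g : G, N g := by
      rw [hsum]; simp
    intro g
    exact ((Finset.sum_eq_sum_iff_of_le (fun i _ => hge i)).1 heq g (mem_univ g)).symm
  intro g
  exact (card_filter_eq_one_iff A B (fun a => p • a) g).1 (hone g)

end Aux
section Aux2

variable {G : Type*} [AddCommGroup G] [Fintype G] [DecidableEq G]

lemma smul_step (B : Finset G) :
    ∀ r : ℕ, 0 < r → ∀ A : Finset G, Nat.Coprime r A.card →
      (∀ g : G, ∃! x : G × G, x.1 ∈ A ∧ x.2 ∈ B ∧ x.1 + x.2 = g) →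
      ∀ g : G, ∃! x : G × G, x.1 ∈ A ∧ x.2 ∈ B ∧ r • x.1 + x.2 = g := by
  intro r
  induction r using Nat.strong_induction_on with
  | _ r ih =>
    intro hr A hcop hfact g
    rcases eq_or_ne r 1 with h1 | h1
    · subst h1; simpa using hfact g
    · have hp : r.minFac.Prime := Nat.minFac_prime h1
      set p := r.minFac with hpdef
      set s := r / p with hsdef
      have hrs : r = s * p := (Nat.div_mul_cancel (Nat.minFac_dvd r)).symm
      have hpA : ¬ p ∣ A.card := by
        have hc : Nat.Coprime p A.card := Nat.Coprime.coprime_dvd_left (Nat.minFac_dvd r) hcop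
        exact (Nat.Prime.coprime_iff_not_dvd hp).1 hc
      have hfact_p := prime_step p hp A B hpA hfact
      -- B is nonempty
      obtain ⟨x0, ⟨hx0A, hx0B, _⟩, _⟩ := hfact 0
      -- injectivity of p • · on A
      have hinj : ∀ a₁ ∈ A, ∀ a₂ ∈ A, p • a₁ = p • a₂ → a₁ = a₂ := by
        intro a₁ ha₁ a₂ ha₂ heq
        obtain ⟨y, hy, huniq⟩ := hfact_p (p • a₁ + x0.2)
        have e1 : (a₁, x0.2) = y := huniq (a₁, x0.2) ⟨ha₁, hx0B, rfl⟩
        have e2 : (a₂, x0.2) = y := huniq (a₂, x0.2) ⟨ha₂, hx0B, by rw [← heq]⟩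
        have := e1.trans e2.symm
        exact (Prod.mk.injEq _ _ _ _ ▸ this).1
      set A' : Finset G := A.image (fun a => p • a) with hA'
      have hcard' : A'.card = A.card := Finset.card_image_of_injOn (fun a ha b hb => hinj a ha b hb)
      have hfact' : ∀ g : G, ∃! x : G × G, x.1 ∈ A' ∧ x.2 ∈ B ∧ x.1 + x.2 = g := by
        intro g
        obtain ⟨y, ⟨hyA, hyB, hyeq⟩, huniq⟩ := hfact_p g
        refine ⟨(p • y.1, y.2), ⟨Finset.mem_image_of_mem _ hyA, hyB, hyeq⟩, ?_⟩
        rintro ⟨a', b⟩ ⟨ha', hb, heq⟩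
        obtain ⟨a, ha, rfl⟩ := Finset.mem_image.1 ha'
        have h' := huniq (a, b) ⟨ha, hb, heq⟩
        have e1 : a = y.1 := congrArg Prod.fst h'
        have e2 : b = y.2 := congrArg Prod.snd h'
        simp [e1, e2]
      have hspos : 0 < s :=
        Nat.div_pos (Nat.minFac_le hr) (Nat.minFac_pos r)
      have hslt : s < r := Nat.div_lt_self hr hp.one_lt
      have hcops : Nat.Coprime s A'.card := by
        rw [hcard']
        exact Nat.Coprime.coprime_dvd_left ⟨p, hrs⟩ hcop
      have hres := ih s hslt hspos A' hcops hfact' g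
      obtain ⟨y, ⟨hyA', hyB, hyeq⟩, huniq⟩ := hres
      obtain ⟨a, ha, hay⟩ := Finset.mem_image.1 hyA'
      refine ⟨(a, y.2), ⟨ha, hyB, ?_⟩, ?_⟩
      · rw [hrs, mul_smul, hay, hyeq]
      · rintro ⟨a₂, b₂⟩ ⟨ha₂, hb₂, heq₂⟩
        have h2 : ((p • a₂ : G), b₂) = y := by
          refine huniq _ ⟨Finset.mem_image_of_mem _ ha₂, hb₂, ?_⟩
          rw [← mul_smul, ← hrs]; exact heq₂
        have hfst : p • a₂ = y.1 := congrArg Prod.fst h2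
        have hsnd : b₂ = y.2 := congrArg Prod.snd h2
        have : a₂ = a := hinj a₂ ha₂ a ha (by rw [hfst, ← hay])
        simp [this, hsnd]

lemma nsmul_eq_of_modeq (x : G) (m : ℕ) (hx : m • x = 0) {c d : ℕ} (h : c ≡ d [MOD m]) :
    c • x = d • x := by
  have key : ∀ e : ℕ, e • x = (e % m) • x := by
    intro e
    conv_lhs => rw [← Nat.div_add_mod e m]
    rw [add_nsmul, mul_nsmul, hx, smul_zero, zero_add]
  rw [key c, key d, h]

end Aux2
section Aux3

variable {G : Type*} [AddCommGroup G] [Fintype G] [DecidableEq G]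

lemma exu_swap {A B : Set G} {g : G}
    (h : ∃! x : G × G, x.1 ∈ A ∧ x.2 ∈ B ∧ x.1 + x.2 = g) :
    ∃! x : G × G, x.1 ∈ B ∧ x.2 ∈ A ∧ x.1 + x.2 = g := by
  obtain ⟨x, ⟨h1, h2, h3⟩, hu⟩ := h
  refine ⟨(x.2, x.1), ⟨h2, h1, by rw [add_comm]; exact h3⟩, ?_⟩
  rintro ⟨b, a⟩ ⟨hb, ha, hab⟩
  have h' := hu (a, b) ⟨ha, hb, by rw [add_comm]; exact hab⟩
  have e1 : a = x.1 := congrArg Prod.fst h'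
  have e2 : b = x.2 := congrArg Prod.snd h'
  simp [e1, e2]

lemma half (H K : AddSubgroup G) (hcop : Nat.Coprime (Nat.card H) (Nat.card K))
    (hsup : H ⊔ K = ⊤) (A B : Set G) (hA : A.ncard = Nat.card H)
    (hfact : ∀ g : G, ∃! x : G × G, x.1 ∈ A ∧ x.2 ∈ B ∧ x.1 + x.2 = g) :
    ∀ g : G, ∃! x : G × G, x.1 ∈ (H : Set G) ∧ x.2 ∈ B ∧ x.1 + x.2 = g := by
  classical
  set m := Nat.card H with hm
  set n := Nat.card K with hn
  have hmpos : 0 < m := Nat.card_pos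
  have hnpos : 0 < n := Nat.card_pos
  obtain ⟨c0, hc1, hc2⟩ := Nat.chineseRemainder hcop 1 0
  set c := c0 + m * n with hcdef
  have hcm : c ≡ 1 [MOD m] := by
    have h0 : m * n ≡ 0 [MOD m] := (Nat.modEq_zero_iff_dvd).2 (Dvd.intro n rfl)
    simpa [hcdef] using hc1.add h0
  have hcn : c ≡ 0 [MOD n] := by
    have h0 : m * n ≡ 0 [MOD n] := (Nat.modEq_zero_iff_dvd).2 (Dvd.intro_left m rfl)
    simpa [hcdef] using hc2.add h0
  have hcpos : 0 < c := Nat.lt_of_lt_of_le (Nat.mul_pos hmpos hnpos) (Nat.le_add_left _ _)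
  have hccop : Nat.Coprime c m := by
    have h1c : 1 ≤ c := hcpos
    have hdvd : m ∣ c - 1 := (Nat.modEq_iff_dvd' h1c).1 hcm.symm
    have d2 : Nat.gcd c m ∣ c - 1 := dvd_trans (Nat.gcd_dvd_right c m) hdvd
    have d3 : Nat.gcd c m ∣ c - (c - 1) := Nat.dvd_sub (Nat.gcd_dvd_left c m) d2
    rw [Nat.sub_sub_self h1c] at d3
    exact Nat.dvd_one.1 d3
  -- action of c on H and K
  have hsmulH : ∀ h ∈ H, c • h = h := by
    intro h hh
    have hz : m • h = 0 := by
      have : m • (⟨h, hh⟩ : H) = 0 := by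
        rw [hm]; exact card_nsmul_eq_zero'
      simpa using congrArg (Subtype.val) this
    have := nsmul_eq_of_modeq h m hz hcm
    rwa [one_nsmul] at this
  have hsmulK : ∀ k ∈ K, c • k = 0 := by
    intro k hk
    have hz : n • k = 0 := by
      have : n • (⟨k, hk⟩ : K) = 0 := by
        rw [hn]; exact card_nsmul_eq_zero'
      simpa using congrArg (Subtype.val) this
    have := nsmul_eq_of_modeq k n hz hcn
    rwa [zero_nsmul] at this
  have hmemH : ∀ g : G, c • g ∈ H := by
    intro g
    have hg : g ∈ H ⊔ K := by rw [hsup]; exact AddSubgroup.mem_top g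
    obtain ⟨h, hh, k, hk, rfl⟩ := (AddSubgroup.mem_sup).1 hg
    rw [smul_add, hsmulH h hh, hsmulK k hk, add_zero]
    exact hh
  -- Finset versions
  have hfactF : ∀ g : G, ∃! x : G × G, x.1 ∈ A.toFinset ∧ x.2 ∈ B.toFinset ∧ x.1 + x.2 = g := by
    intro g
    obtain ⟨x, ⟨h1, h2, h3⟩, hu⟩ := hfact g
    exact ⟨x, ⟨Set.mem_toFinset.2 h1, Set.mem_toFinset.2 h2, h3⟩,
      fun y hy => hu y ⟨Set.mem_toFinset.1 hy.1, Set.mem_toFinset.1 hy.2.1, hy.2.2⟩⟩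
  have hcardA : A.toFinset.card = m := by
    rw [← Set.ncard_eq_toFinset_card', hA]
  have hccopA : Nat.Coprime c A.toFinset.card := by rw [hcardA]; exact hccop
  have FactC := smul_step B.toFinset c hcpos A.toFinset hccopA hfactF
  have FactC' : ∀ g : G, ∃! x : G × G, x.1 ∈ A ∧ x.2 ∈ B ∧ c • x.1 + x.2 = g := by
    intro g
    obtain ⟨x, ⟨h1, h2, h3⟩, hu⟩ := FactC g
    exact ⟨x, ⟨Set.mem_toFinset.1 h1, Set.mem_toFinset.1 h2, h3⟩,
      fun y hy => hu y ⟨Set.mem_toFinset.2 hy.1, Set.mem_toFinset.2 hy.2.1, hy.2.2⟩⟩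
  -- B nonempty
  obtain ⟨x0, ⟨hx0A, hx0B, _⟩, _⟩ := hfact 0
  -- injectivity of c • · on A
  have hinj : ∀ a₁ ∈ A, ∀ a₂ ∈ A, c • a₁ = c • a₂ → a₁ = a₂ := by
    intro a₁ ha₁ a₂ ha₂ heq
    obtain ⟨y, hy, huniq⟩ := FactC' (c • a₁ + x0.2)
    have e1 : (a₁, x0.2) = y := huniq (a₁, x0.2) ⟨ha₁, hx0B, rfl⟩
    have e2 : (a₂, x0.2) = y := huniq (a₂, x0.2) ⟨ha₂, hx0B, by rw [← heq]⟩
    exact congrArg Prod.fst (e1.trans e2.symm)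
  -- the image of A is H
  have himg : (fun a => c • a) '' A = (H : Set G) := by
    apply Set.eq_of_subset_of_ncard_le
    · rintro _ ⟨a, _, rfl⟩
      exact hmemH a
    · rw [Set.ncard_image_of_injOn (fun a ha b hb => hinj a ha b hb), hA]
      have : (H : Set G).ncard = Nat.card H := by
        rw [← Nat.card_coe_set_eq, SetLike.coe_sort_coe]
      rw [this]
    · exact Set.toFinite _
  -- conclusion
  intro g
  obtain ⟨x, ⟨hxA, hxB, hxeq⟩, huniq⟩ := FactC' g
  refine ⟨(c • x.1, x.2), ⟨hmemH x.1, hxB, hxeq⟩, ?_⟩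
  rintro ⟨h, b⟩ ⟨hh, hb, heq⟩
  have hhimg : h ∈ (fun a => c • a) '' A := by rw [himg]; exact hh
  obtain ⟨a, ha, rfl⟩ := hhimg
  have h' := huniq (a, b) ⟨ha, hb, heq⟩
  have e1 : a = x.1 := congrArg Prod.fst h'
  have e2 : b = x.2 := congrArg Prod.snd h'
  simp [e1, e2]

end Aux3

theorem factorization_replacement (G : Type*) [AddCommGroup G] [Fintype G]
    (H K : AddSubgroup G)
    (hcop : Nat.Coprime (Nat.card H) (Nat.card K))
    (hsup : H ⊔ K = ⊤) (hinf : H ⊓ K = ⊥)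
    (A B : Set G) (hA : A.ncard = Nat.card H) (hB : B.ncard = Nat.card K)
    (hfact : ∀ g : G, ∃! p : G × G, p.1 ∈ A ∧ p.2 ∈ B ∧ p.1 + p.2 = g) :
    (∀ g : G, ∃! p : G × G, p.1 ∈ (H : Set G) ∧ p.2 ∈ B ∧ p.1 + p.2 = g) ∧
    (∀ g : G, ∃! p : G × G, p.1 ∈ A ∧ p.2 ∈ (K : Set G) ∧ p.1 + p.2 = g) := by
  classical
  constructor
  · exact half H K hcop hsup A B hA hfact
  · intro g
    have h2 := half K H hcop.symm (by rw [sup_comm]; exact hsup) B A hB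
      (fun g => exu_swap (hfact g)) g
    exact exu_swap h2
end

section
/- Let n ≥ 3, let H be a finite abelian group of order 2n² + 1 with identity e, and let a₁, …, a_n ∈ H be such that e + ∑_{i=1}^{n}(a_i² + a_i^{-2}) + ∑_{1≤i<j≤n}(a_i + a_i^{-1})(a_j + a_j^{-1}) = ∑_{h∈H} h in the group ring ℤ[H]. Let T = {a_i^{±1} : 1 ≤ i ≤ n}. Then T ∩ T^(3) = ∅, where T^(3) = {t³ : t ∈ T}. -/
theorem T_inter_Tcubed_empty (n : ℕ) (hn : 3 ≤ n) (H : Type*) [CommGroup H]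
    [Fintype H] [DecidableEq H] (hcard : Fintype.card H = 2 * n ^ 2 + 1)
    (a : ℕ → H)
    (heq : MonoidAlgebra.single (1 : H) (1 : ℤ)
        + (∑ i ∈ Finset.Icc 1 n,
            (MonoidAlgebra.single ((a i) ^ 2) (1 : ℤ)
              + MonoidAlgebra.single ((a i)⁻¹ ^ 2) (1 : ℤ)))
        + (∑ p ∈ (Finset.Icc 1 n ×ˢ Finset.Icc 1 n).filter (fun p => p.1 < p.2),
            (MonoidAlgebra.single (a p.1) (1 : ℤ) + MonoidAlgebra.single (a p.1)⁻¹ (1 : ℤ))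
              * (MonoidAlgebra.single (a p.2) (1 : ℤ) + MonoidAlgebra.single (a p.2)⁻¹ (1 : ℤ)))
      = ∑ h : H, MonoidAlgebra.single h (1 : ℤ)) :
    ∀ t ∈ (Finset.Icc 1 n).image a ∪ (Finset.Icc 1 n).image (fun i => (a i)⁻¹),
      t ^ 3 ∉ (Finset.Icc 1 n).image a ∪ (Finset.Icc 1 n).image (fun i => (a i)⁻¹) := by
  classical
  -- the coefficient-counting identity
  have key : ∀ x : H,
      (if (1:H) = x then (1:ℤ) else 0)
        + (∑ i ∈ Finset.Icc 1 n,
            ((if a i ^ 2 = x then (1:ℤ) else 0) + (if (a i)⁻¹ ^ 2 = x then 1 else 0)))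
        + (∑ p ∈ (Finset.Icc 1 n ×ˢ Finset.Icc 1 n).filter (fun p => p.1 < p.2),
            ((if a p.1 * a p.2 = x then (1:ℤ) else 0) + (if (a p.1)⁻¹ * a p.2 = x then 1 else 0)
              + ((if a p.1 * (a p.2)⁻¹ = x then (1:ℤ) else 0)
                  + (if (a p.1)⁻¹ * (a p.2)⁻¹ = x then 1 else 0)))) = 1 := by
    intro x
    have h0 := heq
    simp only [mul_add, add_mul, MonoidAlgebra.single_mul_single, one_mul] at h0
    have h2 : (Finsupp.single (1:H) (1:ℤ))
        + (∑ i ∈ Finset.Icc 1 n,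
            (Finsupp.single (a i ^ 2) (1:ℤ) + Finsupp.single ((a i)⁻¹ ^ 2) (1:ℤ)))
        + (∑ p ∈ (Finset.Icc 1 n ×ˢ Finset.Icc 1 n).filter (fun p => p.1 < p.2),
            (Finsupp.single (a p.1 * a p.2) (1:ℤ) + Finsupp.single ((a p.1)⁻¹ * a p.2) (1:ℤ)
              + (Finsupp.single (a p.1 * (a p.2)⁻¹) (1:ℤ)
                  + Finsupp.single ((a p.1)⁻¹ * (a p.2)⁻¹) (1:ℤ))))
        = ∑ h : H, Finsupp.single h (1:ℤ) := by
      have h0' := congrArg MonoidAlgebra.coeff h0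
      simp only [MonoidAlgebra.coeff_add, MonoidAlgebra.coeff_sum, MonoidAlgebra.coeff_single] at h0'
      exact h0'
    have h := DFunLike.congr_fun h2 x
    simp only [Finsupp.add_apply, Finsupp.finset_sum_apply, Finsupp.single_apply] at h
    rw [h, Finset.sum_ite_eq' Finset.univ x (fun _ => (1:ℤ))]
    simp
  have hif : ∀ (P : Prop) [Decidable P], (0:ℤ) ≤ if P then 1 else 0 := by
    intro P _; split <;> norm_num
  have hifE : ∀ (P : Prop) [Decidable P], P → (1:ℤ) ≤ if P then 1 else 0 := by
    intro P _ hP; rw [if_pos hP]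
  -- nonnegativity of the sums
  have hS1nonneg : ∀ x : H, (0:ℤ) ≤ ∑ i ∈ Finset.Icc 1 n,
      ((if a i ^ 2 = x then (1:ℤ) else 0) + (if (a i)⁻¹ ^ 2 = x then 1 else 0)) := by
    intro x
    refine Finset.sum_nonneg fun i _ => add_nonneg (hif _) (hif _)
  have hS2nonneg : ∀ x : H, (0:ℤ) ≤ ∑ p ∈ (Finset.Icc 1 n ×ˢ Finset.Icc 1 n).filter
      (fun p => p.1 < p.2),
      ((if a p.1 * a p.2 = x then (1:ℤ) else 0) + (if (a p.1)⁻¹ * a p.2 = x then 1 else 0)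
        + ((if a p.1 * (a p.2)⁻¹ = x then (1:ℤ) else 0)
            + (if (a p.1)⁻¹ * (a p.2)⁻¹ = x then 1 else 0))) := by
    intro x
    refine Finset.sum_nonneg fun p _ =>
      add_nonneg (add_nonneg (hif _) (hif _)) (add_nonneg (hif _) (hif _))
  have hS1ge : ∀ x : H, ∀ i ∈ Finset.Icc 1 n, (a i ^ 2 = x ∨ (a i)⁻¹ ^ 2 = x) →
      (1:ℤ) ≤ ∑ i ∈ Finset.Icc 1 n,
        ((if a i ^ 2 = x then (1:ℤ) else 0) + (if (a i)⁻¹ ^ 2 = x then 1 else 0)) := by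
    intro x i hi hrep
    have hle := Finset.single_le_sum (f := fun i =>
        ((if a i ^ 2 = x then (1:ℤ) else 0) + (if (a i)⁻¹ ^ 2 = x then 1 else 0)))
      (fun i _ => add_nonneg (hif _) (hif _)) hi
    have h1 : (1:ℤ) ≤ (if a i ^ 2 = x then (1:ℤ) else 0) + (if (a i)⁻¹ ^ 2 = x then 1 else 0) := by
      rcases hrep with h | h
      · have := hifE _ h; have := hif ((a i)⁻¹ ^ 2 = x); linarith
      · have := hifE _ h; have := hif (a i ^ 2 = x); linarith
    exact h1.trans hle
  have hS2ge : ∀ x : H, ∀ p ∈ (Finset.Icc 1 n ×ˢ Finset.Icc 1 n).filter (fun p => p.1 < p.2),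
      (a p.1 * a p.2 = x ∨ (a p.1)⁻¹ * a p.2 = x ∨ a p.1 * (a p.2)⁻¹ = x
        ∨ (a p.1)⁻¹ * (a p.2)⁻¹ = x) →
      (1:ℤ) ≤ ∑ p ∈ (Finset.Icc 1 n ×ˢ Finset.Icc 1 n).filter (fun p => p.1 < p.2),
        ((if a p.1 * a p.2 = x then (1:ℤ) else 0) + (if (a p.1)⁻¹ * a p.2 = x then 1 else 0)
          + ((if a p.1 * (a p.2)⁻¹ = x then (1:ℤ) else 0)
              + (if (a p.1)⁻¹ * (a p.2)⁻¹ = x then 1 else 0))) := by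
    intro x p hp hrep
    have hle := Finset.single_le_sum (f := fun p =>
        ((if a p.1 * a p.2 = x then (1:ℤ) else 0) + (if (a p.1)⁻¹ * a p.2 = x then 1 else 0)
          + ((if a p.1 * (a p.2)⁻¹ = x then (1:ℤ) else 0)
              + (if (a p.1)⁻¹ * (a p.2)⁻¹ = x then 1 else 0))))
      (fun p _ => add_nonneg (add_nonneg (hif _) (hif _)) (add_nonneg (hif _) (hif _))) hp
    have h1 : (1:ℤ) ≤ (if a p.1 * a p.2 = x then (1:ℤ) else 0)
        + (if (a p.1)⁻¹ * a p.2 = x then 1 else 0)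
        + ((if a p.1 * (a p.2)⁻¹ = x then (1:ℤ) else 0)
            + (if (a p.1)⁻¹ * (a p.2)⁻¹ = x then 1 else 0)) := by
      have n1 := hif (a p.1 * a p.2 = x)
      have n2 := hif ((a p.1)⁻¹ * a p.2 = x)
      have n3 := hif (a p.1 * (a p.2)⁻¹ = x)
      have n4 := hif ((a p.1)⁻¹ * (a p.2)⁻¹ = x)
      rcases hrep with h | h | h | h <;>
        · have := hifE _ h; linarith
    exact h1.trans hle
  -- no a i has square one
  have hA : ∀ i ∈ Finset.Icc 1 n, a i ^ 2 ≠ 1 := by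
    intro i hi hsq
    have k1 := key 1
    rw [if_pos rfl] at k1
    have h1 := hS1ge 1 i hi (Or.inl hsq)
    have h2 := hS2nonneg 1
    linarith
  -- odd order: fourth roots of unity are trivial
  have hodd : ∀ u : H, u ^ 4 = 1 → u = 1 := by
    intro u hu
    have h4 : orderOf u ∣ 2 ^ 2 := by
      have := orderOf_dvd_of_pow_eq_one hu; norm_num at this ⊢; exact this
    have hc : orderOf u ∣ 2 * n ^ 2 + 1 := hcard ▸ orderOf_dvd_card
    obtain ⟨k, hk, hdk⟩ := (Nat.dvd_prime_pow Nat.prime_two).mp h4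
    rcases Nat.eq_zero_or_pos k with hk0 | hk0
    · subst hk0; rw [pow_zero] at hdk; exact orderOf_eq_one_iff.mp hdk
    · exfalso
      have h2d : (2:ℕ) ∣ orderOf u := by rw [hdk]; exact dvd_pow_self 2 hk0.ne'
      have : (2:ℕ) ∣ 2 * n ^ 2 + 1 := h2d.trans hc
      omega
  -- main argument
  intro t ht h3
  simp only [Finset.mem_union, Finset.mem_image] at ht h3
  obtain ⟨i, hi, hti⟩ : ∃ i ∈ Finset.Icc 1 n, t = a i ∨ t = (a i)⁻¹ := by
    rcases ht with ⟨i, hi, h⟩ | ⟨i, hi, h⟩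
    · exact ⟨i, hi, Or.inl h.symm⟩
    · exact ⟨i, hi, Or.inr h.symm⟩
  obtain ⟨j, hj, hsj⟩ : ∃ j ∈ Finset.Icc 1 n, t ^ 3 = a j ∨ t ^ 3 = (a j)⁻¹ := by
    rcases h3 with ⟨j, hj, h⟩ | ⟨j, hj, h⟩
    · exact ⟨j, hj, Or.inl h.symm⟩
    · exact ⟨j, hj, Or.inr h.symm⟩
  have haisq : a i ^ 2 ≠ 1 := hA i hi
  by_cases hij : i = j
  · subst hij
    -- then t^3 = t or t^3 = t⁻¹
    have : t ^ 3 = t ∨ t ^ 3 = t⁻¹ := by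
      rcases hti with h | h <;> rcases hsj with h' | h'
      · left; rw [h']; exact h.symm
      · right; rw [h', h]
      · right; rw [h', h, inv_inv]
      · left; rw [h', h]
    rcases this with h | h
    · -- t^2 = 1
      have h2 : t ^ 2 = 1 := by
        calc t ^ 2 = t ^ 3 * t⁻¹ := by group
        _ = t * t⁻¹ := by rw [h]
        _ = 1 := mul_inv_cancel t
      rcases hti with h' | h' <;> rw [h'] at h2
      · exact haisq h2
      · rw [inv_pow, inv_eq_one] at h2; exact haisq h2
    · -- t^4 = 1 hence t = 1
      have h4 : t ^ 4 = 1 := by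
        calc t ^ 4 = t ^ 3 * t := by group
        _ = t⁻¹ * t := by rw [h]
        _ = 1 := inv_mul_cancel t
      have ht1 : t = 1 := hodd t h4
      rcases hti with h' | h' <;> rw [ht1] at h'
      · exact haisq (by rw [← h']; simp)
      · have : a i = 1 := by rw [← inv_eq_one, ← h']
        exact haisq (by rw [this]; simp)
  · -- i ≠ j : double representation of t^2
    set x := t ^ 2 with hx
    have h1 : (1:ℤ) ≤ ∑ i ∈ Finset.Icc 1 n,
        ((if a i ^ 2 = x then (1:ℤ) else 0) + (if (a i)⁻¹ ^ 2 = x then 1 else 0)) := by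
      refine hS1ge x i hi ?_
      rcases hti with h | h
      · exact Or.inl (by rw [← h])
      · exact Or.inr (by rw [← h])
    have hx3 : x = t ^ 3 * t⁻¹ := by rw [hx]; group
    have h2 : (1:ℤ) ≤ ∑ p ∈ (Finset.Icc 1 n ×ˢ Finset.Icc 1 n).filter (fun p => p.1 < p.2),
        ((if a p.1 * a p.2 = x then (1:ℤ) else 0) + (if (a p.1)⁻¹ * a p.2 = x then 1 else 0)
          + ((if a p.1 * (a p.2)⁻¹ = x then (1:ℤ) else 0)
              + (if (a p.1)⁻¹ * (a p.2)⁻¹ = x then 1 else 0))) := by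
      rcases lt_or_gt_of_ne hij with hlt | hlt
      · refine hS2ge x (i, j) ?_ ?_
        · simp only [Finset.mem_filter, Finset.mem_product]; exact ⟨⟨hi, hj⟩, hlt⟩
        · simp only
          rcases hti with h | h <;> rcases hsj with h' | h'
          · -- t = a i, t^3 = a j : x = (a i)⁻¹ * a j
            refine Or.inr (Or.inl ?_)
            rw [← h, ← h', hx3, mul_comm]
          · -- t = a i, t^3 = (a j)⁻¹ : x = (a i)⁻¹ * (a j)⁻¹
            refine Or.inr (Or.inr (Or.inr ?_))
            rw [← h]
            have : a j = (t ^ 3)⁻¹ := by rw [h']; simp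
            rw [this, hx3]; group
          · -- t = (a i)⁻¹, t^3 = a j : x = a i * a j
            refine Or.inl ?_
            have hai : a i = t⁻¹ := by rw [h]; simp
            rw [hai, ← h', hx3, mul_comm]
          · -- t = (a i)⁻¹, t^3 = (a j)⁻¹ : x = a i * (a j)⁻¹
            refine Or.inr (Or.inr (Or.inl ?_))
            have hai : a i = t⁻¹ := by rw [h]; simp
            rw [hai, ← h', hx3, mul_comm]
      · refine hS2ge x (j, i) ?_ ?_
        · simp only [Finset.mem_filter, Finset.mem_product]; exact ⟨⟨hj, hi⟩, hlt⟩
        · simp only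
          rcases hti with h | h <;> rcases hsj with h' | h'
          · -- t = a i, t^3 = a j : x = a j * (a i)⁻¹
            refine Or.inr (Or.inr (Or.inl ?_))
            rw [← h, ← h', hx3]
          · -- t = a i, t^3 = (a j)⁻¹ : x = (a j)⁻¹ * (a i)⁻¹
            refine Or.inr (Or.inr (Or.inr ?_))
            rw [← h]
            have : a j = (t ^ 3)⁻¹ := by rw [h']; simp
            rw [this, hx3]; group
          · -- t = (a i)⁻¹, t^3 = a j : x = a j * a i
            refine Or.inl ?_
            have hai : a i = t⁻¹ := by rw [h]; simp
            rw [hai, ← h', hx3]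
          · -- t = (a i)⁻¹, t^3 = (a j)⁻¹ : x = (a j)⁻¹ * a i
            refine Or.inr (Or.inl ?_)
            have hai : a i = t⁻¹ := by rw [h]; simp
            have : a j = (t ^ 3)⁻¹ := by rw [h']; simp
            rw [hai, this, hx3]; group
    have k := key x
    have hE := hif ((1:H) = x)
    linarith
end
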